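/- arXiv:0904.1480 — 5 statements merged into one kernel-verified Lean document; each statement's English description precedes it below -/
import Mathlib

section
/- Let U_n : ℝ → ℝ (n ∈ ℕ) be twice continuously differentiable, strictly concave, strictly increasing functions whose derivatives U_n' are bijections from ℝ onto (0,∞), such that for each x ∈ ℝ the risk aversion r_n(x) := −U_n''(x)/U_n'(x) tends to ∞ as n → ∞. Suppose there exist x₀ ∈ ℝ, α ∈ (0,∞) and β ∈ ℝ such that U_n'(x₀) → α and U_n(x₀) → β as n → ∞. Then for each y > 0, the Fenchel conjugates V_n(y) := sup_{x ∈ ℝ} (U_n(x) − x y) converge to β − x₀ y as n → ∞. -/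
/-!
With `r n = -U n'' / U n'`, we have `(log U n')' = -r n`, so
`U n' b = U n' a * exp (-∫ t in a..b, r n t)`. Since `r n ≥ 0` tends to infinity pointwise,
these integrals diverge, hence `U n' (x₀ + ε) → 0` and `U n' (x₀ - ε) → ∞` for every `ε > 0`.
Eventually `U n' (x₀ + ε) ≤ y ≤ U n' (x₀ - ε)`, so the concave function `x ↦ U n x - x * y`
takes its supremum within `ε` of `x₀`, and there the tangent at `x₀` bounds it by `U n x₀ - x₀ * y + |U n' x₀ - y| * ε`.
-/

open Filter Set Real Topology MeasureTheory Interval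

theorem ConcaveOn.le_add_deriv_mul {f : ℝ → ℝ} (hf : ConcaveOn ℝ univ f) {a : ℝ}
    (hd : DifferentiableAt ℝ f a) (x : ℝ) : f x ≤ f a + deriv f a * (x - a) := by
  rcases lt_trichotomy x a with hxa | rfl | hax
  · have hslope := hf.deriv_le_slope (mem_univ x) (mem_univ a) hxa hd
    rw [slope_def_field, le_div_iff₀ (sub_pos.2 hxa)] at hslope
    linarith
  · simp
  · have hslope := hf.slope_le_deriv (mem_univ a) (mem_univ x) hax hd
    rw [slope_def_field, div_le_iff₀ (sub_pos.2 hax)] at hslope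
    linarith

theorem ConcaveOn.sub_mul_le_add_abs_deriv_sub_mul {f : ℝ → ℝ} (hf : ConcaveOn ℝ univ f)
    (hd : Differentiable ℝ f) {a y ε : ℝ} (hε : 0 ≤ ε) (hright : deriv f (a + ε) ≤ y)
    (hleft : y ≤ deriv f (a - ε)) (x : ℝ) :
    f x - x * y ≤ f a - a * y + |deriv f a - y| * ε := by
  have hnear : ∀ p, |p - a| ≤ ε → f p - p * y ≤ f a - a * y + |deriv f a - y| * ε := by
    intro p hp
    have htangent := hf.le_add_deriv_mul (hd a) p
    have hprod : (deriv f a - y) * (p - a) ≤ |deriv f a - y| * ε :=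
      calc (deriv f a - y) * (p - a) ≤ |deriv f a - y| * |p - a| :=
            (le_abs_self _).trans (abs_mul _ _).le
        _ ≤ |deriv f a - y| * ε := mul_le_mul_of_nonneg_left hp (abs_nonneg _)
    linarith
  obtain ⟨p, hp, hxp⟩ : ∃ p, |p - a| ≤ ε ∧ f x - x * y ≤ f p - p * y := by
    by_cases hlow : x ≤ a - ε
    · refine ⟨a - ε, by simp [abs_of_nonneg hε], ?_⟩
      have htangent := hf.le_add_deriv_mul (hd (a - ε)) x
      nlinarith [mul_nonneg (sub_nonneg.2 hleft) (sub_nonneg.2 hlow)]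
    by_cases hhigh : a + ε ≤ x
    · refine ⟨a + ε, by simp [abs_of_nonneg hε], ?_⟩
      have htangent := hf.le_add_deriv_mul (hd (a + ε)) x
      nlinarith [mul_nonneg (sub_nonneg.2 hright) (sub_nonneg.2 hhigh)]
    exact ⟨x, abs_sub_le_iff.2 ⟨by linarith, by linarith⟩, le_rfl⟩
  exact hxp.trans (hnear p hp)

theorem tendsto_ciSup_of_forall_eventually_le_add {ι κ : Type*} {l : Filter ι}
    {φ : ι → κ → ℝ} {x₀ : κ} {c : ι → ℝ} {c₀ L : ℝ}
    (hφ : Tendsto (fun i => φ i x₀) l (𝓝 L)) (hc : Tendsto c l (𝓝 c₀))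
    (hbound : ∀ ε > 0, ∀ᶠ i in l, ∀ x, φ i x ≤ φ i x₀ + c i * ε) :
    Tendsto (fun i => ⨆ x, φ i x) l (𝓝 L) := by
  have : Nonempty κ := ⟨x₀⟩
  rw [tendsto_order]
  constructor
  · intro m hm
    filter_upwards [hφ.eventually (eventually_gt_nhds hm), hbound 1 one_pos] with i hi hbi
    exact hi.trans_le (le_ciSup ⟨_, forall_mem_range.2 hbi⟩ x₀)
  · intro M hM
    set C := |c₀| + 1
    have hC : 0 < C := by positivity
    have hδ : 0 < (M - L) / 2 := by linarith
    filter_upwards [hφ.eventually (eventually_lt_nhds (by linarith : L < L + (M - L) / 2)),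
      hc.eventually (eventually_lt_nhds ((le_abs_self c₀).trans_lt (lt_add_one _))),
      hbound ((M - L) / 2 / C) (div_pos hδ hC)] with i hi hci hbi
    have hcε : c i * ((M - L) / 2 / C) ≤ (M - L) / 2 := by
      calc c i * ((M - L) / 2 / C) ≤ C * ((M - L) / 2 / C) := by gcongr
        _ = (M - L) / 2 := by field_simp
    exact (ciSup_le hbi).trans_lt (by linarith)

theorem tendsto_intervalIntegral_atTop {ι : Type*} {l : Filter ι} [l.IsCountablyGenerated]
    {r : ι → ℝ → ℝ} {a b : ℝ} (hab : a < b) (hint : ∀ i, IntervalIntegrable (r i) volume a b)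
    (hnonneg : ∀ i t, 0 ≤ r i t) (hr : ∀ t, Tendsto (fun i => r i t) l atTop) :
    Tendsto (fun i => ∫ t in a..b, r i t) l atTop := by
  refine tendsto_atTop.2 fun M => ?_
  set K := (|M| + 1) / (b - a)
  have hK : 0 ≤ K := by have := sub_pos.2 hab; positivity
  have hmeas : ∀ i, AEStronglyMeasurable (fun t => min (r i t) K) (volume.restrict (Ι a b)) :=
    fun i => (hint i).def'.aestronglyMeasurable.inf aestronglyMeasurable_const
  have hbound : ∀ i t, ‖min (r i t) K‖ ≤ K := fun i t => by
    rw [Real.norm_of_nonneg (le_min (hnonneg i t) hK)]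
    exact min_le_right _ _
  -- the truncations `min (r i) K` tend to `K`, so dominated convergence applies to them
  have htrunc : Tendsto (fun i => ∫ t in a..b, min (r i t) K) l (𝓝 (|M| + 1)) := by
    have hlim : (∫ _ in a..b, K) = |M| + 1 := by
      rw [intervalIntegral.integral_const, smul_eq_mul, mul_div_cancel₀ _ (sub_pos.2 hab).ne']
    rw [← hlim]
    refine intervalIntegral.tendsto_integral_filter_of_dominated_convergence (fun _ => K)
      (.of_forall hmeas) (.of_forall fun i => ae_of_all _ fun t _ => hbound i t)
      intervalIntegrable_const (ae_of_all _ fun t _ => tendsto_const_nhds.congr' ?_)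
    filter_upwards [(hr t).eventually_ge_atTop K] with i hi
    exact (min_eq_right hi).symm
  filter_upwards [htrunc.eventually
    (eventually_ge_nhds ((le_abs_self M).trans_lt (lt_add_one _)))] with i hi
  refine hi.trans (intervalIntegral.integral_mono_on hab.le ?_ (hint i) fun t _ => min_le_left _ _)
  exact intervalIntegrable_const.mono_fun' (hmeas i) (ae_of_all _ (hbound i))

noncomputable def riskAversion (U : ℝ → ℝ) (x : ℝ) : ℝ := -deriv (deriv U) x / deriv U x

section RiskAversion

variable {U : ℝ → ℝ}

theorem riskAversion_nonneg (hU : ConcaveOn ℝ univ U) (hd : Differentiable ℝ U) {x : ℝ}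
    (hpos : 0 ≤ deriv U x) : 0 ≤ riskAversion U x := by
  have hanti : Antitone (deriv U) :=
    antitoneOn_univ.1 (hU.antitoneOn_deriv fun x _ => hd x)
  exact div_nonneg (neg_nonneg.2 hanti.deriv_nonpos) hpos

theorem continuous_riskAversion (hU : ContDiff ℝ 2 U) (hne : ∀ x, deriv U x ≠ 0) :
    Continuous (riskAversion U) := by
  have hU' : ContDiff ℝ 1 (deriv U) := hU.iterate_deriv' 1 1
  exact (hU'.continuous_deriv le_rfl).neg.div hU'.continuous hne

theorem deriv_eq_mul_exp_neg_integral_riskAversion (hU : ContDiff ℝ 2 U)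
    (hpos : ∀ x, 0 < deriv U x) (a b : ℝ) :
    deriv U b = deriv U a * exp (-∫ t in a..b, riskAversion U t) := by
  have hU' : Differentiable ℝ (deriv U) := (hU.iterate_deriv' 1 1).differentiable one_ne_zero
  have hlog : ∀ t ∈ uIcc a b, HasDerivAt (fun s => log (deriv U s)) (-riskAversion U t) t := by
    intro t _
    simpa [riskAversion, neg_div] using (hU' t).hasDerivAt.log (hpos t).ne'
  have hint := intervalIntegral.integral_eq_sub_of_hasDerivAt hlog
    ((continuous_riskAversion hU fun x => (hpos x).ne').neg.intervalIntegrable a b)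
  rw [intervalIntegral.integral_neg] at hint
  rw [hint, exp_sub, exp_log (hpos b), exp_log (hpos a)]
  field_simp [(hpos a).ne']

end RiskAversion

section Family

variable {ι : Type*} {l : Filter ι} [l.IsCountablyGenerated] {U : ι → ℝ → ℝ} {a b α : ℝ}

theorem tendsto_integral_riskAversion_atTop (hC2 : ∀ i, ContDiff ℝ 2 (U i))
    (hconc : ∀ i, ConcaveOn ℝ univ (U i)) (hpos : ∀ i x, 0 < deriv (U i) x)
    (hra : ∀ x, Tendsto (fun i => riskAversion (U i) x) l atTop) (hab : a < b) :
    Tendsto (fun i => ∫ t in a..b, riskAversion (U i) t) l atTop :=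
  tendsto_intervalIntegral_atTop hab
    (fun i => (continuous_riskAversion (hC2 i) fun x => (hpos i x).ne').intervalIntegrable a b)
    (fun i t => riskAversion_nonneg (hconc i) ((hC2 i).differentiable (by norm_num))
      (hpos i t).le) hra

theorem tendsto_deriv_nhds_zero_of_tendsto_riskAversion (hC2 : ∀ i, ContDiff ℝ 2 (U i))
    (hconc : ∀ i, ConcaveOn ℝ univ (U i)) (hpos : ∀ i x, 0 < deriv (U i) x)
    (hra : ∀ x, Tendsto (fun i => riskAversion (U i) x) l atTop) (hab : a < b)
    (ha : Tendsto (fun i => deriv (U i) a) l (𝓝 α)) :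
    Tendsto (fun i => deriv (U i) b) l (𝓝 0) := by
  have hlim := ha.mul (tendsto_exp_neg_atTop_nhds_zero.comp
    (tendsto_integral_riskAversion_atTop hC2 hconc hpos hra hab))
  rw [mul_zero] at hlim
  refine hlim.congr fun i => ?_
  exact (deriv_eq_mul_exp_neg_integral_riskAversion (hC2 i) (hpos i) a b).symm

theorem tendsto_deriv_atTop_of_tendsto_riskAversion (hC2 : ∀ i, ContDiff ℝ 2 (U i))
    (hconc : ∀ i, ConcaveOn ℝ univ (U i)) (hpos : ∀ i x, 0 < deriv (U i) x)
    (hra : ∀ x, Tendsto (fun i => riskAversion (U i) x) l atTop) (hab : a < b) (hα : 0 < α)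
    (hb : Tendsto (fun i => deriv (U i) b) l (𝓝 α)) :
    Tendsto (fun i => deriv (U i) a) l atTop := by
  refine (hb.pos_mul_atTop hα (tendsto_exp_atTop.comp
    (tendsto_integral_riskAversion_atTop hC2 hconc hpos hra hab))).congr fun i => ?_
  simp only [Function.comp_apply, deriv_eq_mul_exp_neg_integral_riskAversion (hC2 i) (hpos i) a b,
    mul_assoc, ← exp_add, neg_add_cancel, exp_zero, mul_one]

end Family

theorem reservation_conjugate_limit_general (U : ℕ → ℝ → ℝ)
    (hC2 : ∀ n, ContDiff ℝ 2 (U n))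
    (hconc : ∀ n, StrictConcaveOn ℝ Set.univ (U n))
    (hbij : ∀ n, Set.BijOn (deriv (U n)) Set.univ (Set.Ioi (0 : ℝ)))
    (hra : ∀ x : ℝ,
      Tendsto (fun n => -(deriv (deriv (U n)) x) / deriv (U n) x) atTop atTop)
    (x₀ α β : ℝ) (hα : 0 < α)
    (hd : Tendsto (fun n => deriv (U n) x₀) atTop (nhds α))
    (hu : Tendsto (fun n => U n x₀) atTop (nhds β)) :
    ∀ y > (0 : ℝ),
      Tendsto (fun n => ⨆ x : ℝ, (U n x - x * y)) atTop (nhds (β - x₀ * y)) := by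
  intro y hy
  have hconc' : ∀ n, ConcaveOn ℝ univ (U n) := fun n => (hconc n).concaveOn
  have hpos : ∀ n x, 0 < deriv (U n) x := fun n x => (hbij n).mapsTo (mem_univ x)
  refine tendsto_ciSup_of_forall_eventually_le_add (hu.sub_const _) (hd.sub_const y).abs
    fun ε hε => ?_
  have hright := tendsto_deriv_nhds_zero_of_tendsto_riskAversion hC2 hconc' hpos hra
    (lt_add_of_pos_right x₀ hε) hd
  have hleft := tendsto_deriv_atTop_of_tendsto_riskAversion hC2 hconc' hpos hra
    (sub_lt_self x₀ hε) hα hd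
  filter_upwards [hright.eventually (eventually_le_nhds hy), hleft.eventually_ge_atTop y]
    with n hright hleft x
  exact (hconc' n).sub_mul_le_add_abs_deriv_sub_mul ((hC2 n).differentiable (by norm_num))
    hε.le hright hleft x

/-- Under risk aversion tending to infinity and convergence of `U n` and its derivative
at `x₀`, the Fenchel conjugates `V n y = ⨆ x, U n x - x * y` converge to `β - x₀ * y`
for each `y > 0`. -/
theorem reservation_conjugate_limit (U : ℕ → ℝ → ℝ)
    (hC2 : ∀ n, ContDiff ℝ 2 (U n))
    (hconc : ∀ n, StrictConcaveOn ℝ Set.univ (U n))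
    (hmono : ∀ n, StrictMono (U n))
    (hbij : ∀ n, Set.BijOn (deriv (U n)) Set.univ (Set.Ioi (0 : ℝ)))
    (hra : ∀ x : ℝ,
      Tendsto (fun n => -(deriv (deriv (U n)) x) / deriv (U n) x) atTop atTop)
    (x₀ α β : ℝ) (hα : 0 < α)
    (hd : Tendsto (fun n => deriv (U n) x₀) atTop (nhds α))
    (hu : Tendsto (fun n => U n x₀) atTop (nhds β)) :
    ∀ y > (0 : ℝ),
      Tendsto (fun n => ⨆ x : ℝ, (U n x - x * y)) atTop (nhds (β - x₀ * y)) :=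
  reservation_conjugate_limit_general U hC2 hconc hbij hra x₀ α β hα hd hu
end

section
/- Let (Ω, 𝓕, P) be a probability space, K > 0, α ∈ (0,1), and let Z, Z' : Ω → [0,∞) be random variables with Z integrable, Z > 0 almost surely, and Z' ≤ K·Z almost surely. Let V_n : (0,∞) → ℝ (n ∈ ℕ) be measurable functions for which there exist constants C₁, C₂, C₃ ≥ 0 such that V_n(λ y) ≤ C₁ V_n(y) + C₂ y + C₃ for all n ∈ ℕ, all y > 0 and all λ ∈ [α, α + (1−α)K], and there exist constants b, c ∈ ℝ such that V_n(y) ≥ b − c·y for all n ∈ ℕ and all y > 0. If the family (V_n(Z))_{n ∈ ℕ} is uniformly integrable with respect to P, then the family (V_n(α Z + (1−α) Z'))_{n ∈ ℕ} is uniformly integrable with respect to P. -/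
/-!
Write `a Z + (1 - a) Z' = λ Z` with the random factor `λ = a + (1 - a) Z' / Z`, which lies in
`[a, a + (1 - a) K]`. The growth bound gives `V_n(λ Z) ≤ C₁ V_n(Z) + C₂ Z + C₃` and the affine
lower bound gives `V_n(λ Z) ≥ b - c λ Z`, so `|V_n(a Z + (1 - a) Z')| ≤ C₁ |V_n(Z)| + h` with `h`
a fixed affine function of `Z`, hence integrable. Domination by a uniformly integrable family
plus one integrable function preserves uniform integrability.
-/

open MeasureTheory
open scoped ENNReal

namespace MeasureTheory

variable {α ι β γ : Type*} [MeasurableSpace α] {μ : Measure α} [NormedAddCommGroup β]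
  [NormedAddCommGroup γ] {p : ℝ≥0∞} {f : ι → α → β} {g : ι → α → γ}

theorem UnifIntegrable.of_norm_le (hf : UnifIntegrable f p μ)
    (hgf : ∀ i, ∀ᵐ x ∂μ, ‖g i x‖ ≤ ‖f i x‖) : UnifIntegrable g p μ := by
  intro ε hε
  obtain ⟨δ, hδ, hfδ⟩ := hf hε
  refine ⟨δ, hδ, fun i s hs hμs => (eLpNorm_mono_ae ?_).trans (hfδ i s hs hμs)⟩
  filter_upwards [hgf i] with x hx
  simp only [norm_indicator_eq_indicator_norm]
  exact Set.indicator_le_indicator hx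

theorem UniformIntegrable.of_norm_le (hf : UniformIntegrable f p μ)
    (hg : ∀ i, AEStronglyMeasurable (g i) μ)
    (hgf : ∀ i, ∀ᵐ x ∂μ, ‖g i x‖ ≤ ‖f i x‖) : UniformIntegrable g p μ :=
  let ⟨C, hC⟩ := hf.2.2
  ⟨hg, hf.unifIntegrable.of_norm_le hgf, C, fun i => (eLpNorm_mono_ae (hgf i)).trans (hC i)⟩

theorem UniformIntegrable.norm (hf : UniformIntegrable f p μ) :
    UniformIntegrable (fun i x => ‖f i x‖) p μ :=
  hf.of_norm_le (fun i => (hf.1 i).norm) fun _ => .of_forall fun _ => (norm_norm _).le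

theorem UniformIntegrable.add {f g : ι → α → β} (hf : UniformIntegrable f p μ)
    (hg : UniformIntegrable g p μ) (hp : 1 ≤ p) : UniformIntegrable (f + g) p μ := by
  obtain ⟨Cf, hCf⟩ := hf.2.2
  obtain ⟨Cg, hCg⟩ := hg.2.2
  refine ⟨fun i => (hf.1 i).add (hg.1 i), hf.2.1.add hg.2.1 hp hf.1 hg.1, Cf + Cg, fun i => ?_⟩
  calc eLpNorm (f i + g i) p μ ≤ eLpNorm (f i) p μ + eLpNorm (g i) p μ :=
        eLpNorm_add_le (hf.1 i) (hg.1 i) hp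
    _ ≤ Cf + Cg := by gcongr; exacts [hCf i, hCg i]

section ConstSMul

variable {𝕜 : Type*} [NormedRing 𝕜] [MulActionWithZero 𝕜 β] [IsBoundedSMul 𝕜 β]

theorem UnifIntegrable.const_smul (hf : UnifIntegrable f p μ) (c : 𝕜) :
    UnifIntegrable (fun i => c • f i) p μ := by
  intro ε hε
  obtain ⟨δ, hδ, hfδ⟩ := hf (show 0 < ε / (‖c‖ + 1) by positivity)
  refine ⟨δ, hδ, fun i s hs hμs => ?_⟩
  calc eLpNorm (s.indicator (c • f i)) p μ = eLpNorm (c • s.indicator (f i)) p μ := by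
        congr 1; exact Set.indicator_const_smul s c (f i)
    _ ≤ ‖c‖ₑ * ENNReal.ofReal (ε / (‖c‖ + 1)) :=
        eLpNorm_const_smul_le.trans (by gcongr; exact hfδ i s hs hμs)
    _ = ENNReal.ofReal (‖c‖ * (ε / (‖c‖ + 1))) := by
        rw [ENNReal.ofReal_mul (norm_nonneg c), ofReal_norm]
    _ ≤ ENNReal.ofReal ε := by
        gcongr
        rw [mul_div_assoc', div_le_iff₀ (by positivity)]
        nlinarith [norm_nonneg c]

theorem UniformIntegrable.const_smul (hf : UniformIntegrable f p μ) (c : 𝕜) :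
    UniformIntegrable (fun i => c • f i) p μ := by
  obtain ⟨C, hC⟩ := hf.2.2
  refine ⟨fun i => (hf.1 i).const_smul c, hf.2.1.const_smul c, ‖c‖₊ * C, fun i => ?_⟩
  calc eLpNorm (c • f i) p μ ≤ ‖c‖ₑ * eLpNorm (f i) p μ := eLpNorm_const_smul_le
    _ ≤ ‖c‖₊ * C := by gcongr; exacts [le_rfl, hC i]

end ConstSMul

theorem UniformIntegrable.of_norm_le_mul_add (hf : UniformIntegrable f p μ) (hp : 1 ≤ p)
    (hp' : p ≠ ∞) {C : ℝ} {h : α → ℝ} (hh : MemLp h p μ)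
    (hg : ∀ i, AEStronglyMeasurable (g i) μ)
    (hgf : ∀ i, ∀ᵐ x ∂μ, ‖g i x‖ ≤ C * ‖f i x‖ + h x) :
    UniformIntegrable g p μ := by
  have hF : UniformIntegrable (fun i => C • (fun x => ‖f i x‖) + h) p μ :=
    (hf.norm.const_smul C).add (uniformIntegrable_const hp hp' hh) hp
  refine hF.of_norm_le hg fun i => ?_
  filter_upwards [hgf i] with x hx
  exact hx.trans (le_abs_self _)

end MeasureTheory

theorem exists_mem_Icc_mul_eq_convex_combination {a K y y' : ℝ} (ha : a ≤ 1) (hy : 0 < y)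
    (hy' : 0 ≤ y') (hy'K : y' ≤ K * y) :
    ∃ l ∈ Set.Icc a (a + (1 - a) * K), a * y + (1 - a) * y' = l * y := by
  have hratio : y' / y ≤ K := (div_le_iff₀ hy).2 hy'K
  refine ⟨a + (1 - a) * (y' / y), ⟨?_, ?_⟩, ?_⟩
  · nlinarith [div_nonneg hy' hy.le]
  · nlinarith
  · rw [add_mul, mul_assoc, div_mul_cancel₀ _ hy.ne']

theorem abs_apply_convex_combination_le {V : ℝ → ℝ} {K a C₁ C₂ C₃ b c y y' : ℝ}
    (ha : a ∈ Set.Ioo 0 1) (hC₁ : 0 ≤ C₁) (hC₂ : 0 ≤ C₂) (hC₃ : 0 ≤ C₃)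
    (hgrowth : ∀ y > (0 : ℝ), ∀ l ∈ Set.Icc a (a + (1 - a) * K),
      V (l * y) ≤ C₁ * V y + C₂ * y + C₃)
    (hlb : ∀ y > (0 : ℝ), b - c * y ≤ V y) (hy : 0 < y) (hy' : 0 ≤ y') (hy'K : y' ≤ K * y) :
    |V (a * y + (1 - a) * y')| ≤
      C₁ * |V y| + ((C₂ + |c| * (a + (1 - a) * K)) * y + (C₃ + |b|)) := by
  obtain ⟨l, ⟨hal, hlM⟩, hw⟩ :=
    exists_mem_Icc_mul_eq_convex_combination ha.2.le hy hy' hy'K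
  have hly : 0 < l * y := mul_pos (ha.1.trans_le hal) hy
  have upper := hgrowth y hy l ⟨hal, hlM⟩
  have lower := hlb (l * y) hly
  have hcw : c * (l * y) ≤ |c| * ((a + (1 - a) * K) * y) :=
    calc c * (l * y) ≤ |c| * (l * y) := by gcongr; exact le_abs_self c
      _ ≤ |c| * ((a + (1 - a) * K) * y) := by gcongr
  have hMy : 0 ≤ |c| * ((a + (1 - a) * K) * y) :=
    mul_nonneg (abs_nonneg c) (mul_nonneg ((ha.1.le.trans hal).trans hlM) hy.le)
  rw [hw, abs_le]
  constructor
  · linarith [neg_abs_le b, mul_nonneg hC₁ (abs_nonneg (V y)), mul_nonneg hC₂ hy.le]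
  · linarith [abs_nonneg b, mul_le_mul_of_nonneg_left (le_abs_self (V y)) hC₁]

theorem uniformIntegrable_convex_combination_general {Ω : Type*} [MeasurableSpace Ω]
    (P : Measure Ω) [IsProbabilityMeasure P]
    (K : ℝ) (a : ℝ) (ha : a ∈ Set.Ioo (0 : ℝ) 1)
    (Z Z' : Ω → ℝ) (hZm : Measurable Z) (hZ'm : Measurable Z')
    (hZ'nn : ∀ ω, 0 ≤ Z' ω)
    (hZint : Integrable Z P)
    (hZpos : ∀ᵐ ω ∂P, 0 < Z ω)
    (hZ'K : ∀ᵐ ω ∂P, Z' ω ≤ K * Z ω)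
    (V : ℕ → ℝ → ℝ) (hVm : ∀ n, Measurable (V n))
    (C₁ C₂ C₃ : ℝ) (hC₁ : 0 ≤ C₁) (hC₂ : 0 ≤ C₂) (hC₃ : 0 ≤ C₃)
    (hgrowth : ∀ n, ∀ y > (0 : ℝ), ∀ l ∈ Set.Icc a (a + (1 - a) * K),
      V n (l * y) ≤ C₁ * V n y + C₂ * y + C₃)
    (b c : ℝ) (hlb : ∀ n, ∀ y > (0 : ℝ), b - c * y ≤ V n y)
    (hUI : UniformIntegrable (fun n ω => V n (Z ω)) 1 P) :
    UniformIntegrable (fun n ω => V n (a * Z ω + (1 - a) * Z' ω)) 1 P := by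
  have hdom : MemLp (fun ω => (C₂ + |c| * (a + (1 - a) * K)) * Z ω + (C₃ + |b|)) 1 P :=
    memLp_one_iff_integrable.2 ((hZint.const_mul _).add (integrable_const _))
  refine hUI.of_norm_le_mul_add (C := C₁) le_rfl ENNReal.one_ne_top hdom
    (fun n => ((hVm n).comp (by fun_prop)).aestronglyMeasurable) fun n => ?_
  filter_upwards [hZpos, hZ'K] with ω hZω hZ'Kω
  simpa only [Real.norm_eq_abs] using
    abs_apply_convex_combination_le ha hC₁ hC₂ hC₃ (hgrowth n) (hlb n) hZω (hZ'nn ω) hZ'Kω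

/-- Uniform integrability of `V n (Z)` propagates to `V n (α Z + (1 - α) Z')` when
`Z' ≤ K Z` a.s., under a uniform elasticity-type growth bound and a uniform affine
lower bound on the `V n`. -/
theorem uniformIntegrable_convex_combination {Ω : Type*} [MeasurableSpace Ω]
    (P : Measure Ω) [IsProbabilityMeasure P]
    (K : ℝ) (hK : 0 < K) (a : ℝ) (ha : a ∈ Set.Ioo (0 : ℝ) 1)
    (Z Z' : Ω → ℝ) (hZm : Measurable Z) (hZ'm : Measurable Z')
    (hZnn : ∀ ω, 0 ≤ Z ω) (hZ'nn : ∀ ω, 0 ≤ Z' ω)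
    (hZint : Integrable Z P)
    (hZpos : ∀ᵐ ω ∂P, 0 < Z ω)
    (hZ'K : ∀ᵐ ω ∂P, Z' ω ≤ K * Z ω)
    (V : ℕ → ℝ → ℝ) (hVm : ∀ n, Measurable (V n))
    (C₁ C₂ C₃ : ℝ) (hC₁ : 0 ≤ C₁) (hC₂ : 0 ≤ C₂) (hC₃ : 0 ≤ C₃)
    (hgrowth : ∀ n, ∀ y > (0 : ℝ), ∀ l ∈ Set.Icc a (a + (1 - a) * K),
      V n (l * y) ≤ C₁ * V n y + C₂ * y + C₃)
    (b c : ℝ) (hlb : ∀ n, ∀ y > (0 : ℝ), b - c * y ≤ V n y)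
    (hUI : UniformIntegrable (fun n ω => V n (Z ω)) 1 P) :
    UniformIntegrable (fun n ω => V n (a * Z ω + (1 - a) * Z' ω)) 1 P :=
  uniformIntegrable_convex_combination_general P K a ha Z Z' hZm hZ'm hZ'nn hZint hZpos hZ'K V hVm
    C₁ C₂ C₃ hC₁ hC₂ hC₃ hgrowth b c hlb hUI
end

section
/- Let U_n : ℝ → ℝ (n ∈ ℕ) be twice continuously differentiable, strictly concave, strictly increasing functions whose derivatives U_n' are bijections from ℝ onto (0,∞), such that for each x ∈ ℝ the risk aversion r_n(x) := −U_n''(x)/U_n'(x) tends to ∞ as n → ∞, and suppose there exist x₀ ∈ ℝ, α ∈ (0,∞), β ∈ ℝ with U_n'(x₀) → α and U_n(x₀) → β as n → ∞. Then for every K > 1 there exists a constant C such that |V_n(y)| ≤ C for all n ∈ ℕ and all y ∈ [1/K, K], where V_n(y) := sup_{x ∈ ℝ} (U_n(x) − x y). -/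
/-!
Writing `r = -(log U')'`, the ratio `U_n'(a) / U_n'(b)` equals `exp (∫_a^b r_n)`, and this integral
tends to `∞` by dominated convergence applied to `min r_n c`. Hence `U_n'(x₀ - 1) → ∞` and
`U_n'(x₀ + 1) → 0`, so for large `n` every slope `y ∈ [1/K, K]` is attained in `[x₀ - 1, x₀ + 1]`
and concavity bounds `U_n x - x y` by `U_n(x₀) + U_n'(x₀) + K max |x₀ ± 1|`, which converges. The
finitely many remaining `n` are handled one at a time through the surjectivity of `U_n'`, and
`V_n(y) ≥ U_n(x₀) - x₀ y` gives the lower bound.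
-/

open Filter Set

noncomputable def absRiskAversion (f : ℝ → ℝ) (x : ℝ) : ℝ :=
  -deriv (deriv f) x / deriv f x

theorem ConcaveOn.le_add_deriv_mul_sub {S : Set ℝ} {f : ℝ → ℝ} (hf : ConcaveOn ℝ S f)
    {a x : ℝ} (ha : a ∈ S) (hx : x ∈ S) (hd : DifferentiableAt ℝ f a) :
    f x ≤ f a + deriv f a * (x - a) := by
  rcases lt_trichotomy a x with h | rfl | h
  · have := hf.slope_le_deriv ha hx h hd
    rw [slope_def_field, div_le_iff₀ (sub_pos.2 h)] at this
    linarith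
  · simp
  · have := hf.deriv_le_slope hx ha h hd
    rw [slope_def_field, le_div_iff₀ (sub_pos.2 h)] at this
    linarith

-- A tangent of slope `y ∈ [c, d]` touches the graph of `f` between `a` and `b`.
theorem ConcaveOn.sub_mul_le {f : ℝ → ℝ} (hf : ConcaveOn ℝ univ f) {a b c d y : ℝ}
    (hfa : DifferentiableAt ℝ f a) (hfb : DifferentiableAt ℝ f b) (hb0 : 0 ≤ deriv f b)
    (hbc : deriv f b ≤ c) (hda : d ≤ deriv f a) (hy : y ∈ Icc c d) (x : ℝ) :
    f x - x * y ≤ f b + d * max |a| |b| := by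
  have hy0 : 0 ≤ y := hb0.trans (hbc.trans hy.1)
  have hyd : y * max |a| |b| ≤ d * max |a| |b| := by gcongr; exact hy.2
  rcases le_or_gt x a with hxa | hax
  · have hta := hf.le_add_deriv_mul_sub (mem_univ a) (mem_univ x) hfa
    have htab := hf.le_add_deriv_mul_sub (mem_univ b) (mem_univ a) hfb
    have hconj_a : f a - a * y ≤ f b + y * max |a| |b| := by
      rcases le_total a b with hab | hba
      · nlinarith [mul_nonpos_of_nonneg_of_nonpos hb0 (sub_nonpos.2 hab), neg_abs_le a,
          le_max_left |a| |b|]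
      · nlinarith [mul_le_mul_of_nonneg_right (hbc.trans hy.1) (sub_nonneg.2 hba), neg_abs_le b,
          le_max_right |a| |b|]
    nlinarith [mul_le_mul_of_nonpos_right (hy.2.trans hda) (sub_nonpos.2 hxa)]
  have htb := hf.le_add_deriv_mul_sub (mem_univ b) (mem_univ x) hfb
  rcases le_or_gt b x with hbx | hxb
  · have : -(b * y) ≤ y * max |a| |b| := by
      nlinarith [neg_abs_le b, le_max_right |a| |b|]
    nlinarith [mul_le_mul_of_nonneg_right (hbc.trans hy.1) (sub_nonneg.2 hbx)]
  · have : -(x * y) ≤ y * max |a| |b| := by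
      nlinarith [abs_le_max_abs_abs hax.le hxb.le, neg_abs_le x]
    nlinarith [mul_nonpos_of_nonneg_of_nonpos hb0 (sub_nonpos.2 hxb.le)]

theorem absRiskAversion_nonneg {f : ℝ → ℝ} (hf : ConcaveOn ℝ univ f) (hf2 : ContDiff ℝ 2 f)
    {x : ℝ} (hx : 0 ≤ deriv f x) : 0 ≤ absRiskAversion f x := by
  have hanti : Antitone (deriv f) := antitoneOn_univ.1 <|
    hf.antitoneOn_deriv fun z _ => (hf2.differentiable two_ne_zero).differentiableAt
  exact div_nonneg (neg_nonneg.2 hanti.deriv_nonpos) hx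

theorem continuous_absRiskAversion {f : ℝ → ℝ} (hf2 : ContDiff ℝ 2 f)
    (hpos : ∀ x, deriv f x ≠ 0) : Continuous (absRiskAversion f) :=
  ((hf2.deriv' (n := 1)).continuous_deriv_one.neg).div (hf2.continuous_deriv one_le_two) hpos

theorem deriv_div_deriv_eq_exp_integral_absRiskAversion {f : ℝ → ℝ} (hf2 : ContDiff ℝ 2 f)
    (hpos : ∀ x, 0 < deriv f x) (a b : ℝ) :
    deriv f a / deriv f b = Real.exp (∫ x in a..b, absRiskAversion f x) := by
  have hlog : ∀ x ∈ uIcc a b,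
      HasDerivAt (fun t => -Real.log (deriv f t)) (absRiskAversion f x) x := fun x _ => by
    rw [absRiskAversion, neg_div]
    exact ((hf2.differentiable_deriv_two x).hasDerivAt.log (hpos x).ne').neg
  have hint := (continuous_absRiskAversion hf2 fun x => (hpos x).ne').intervalIntegrable
    (μ := MeasureTheory.volume) a b
  rw [intervalIntegral.integral_eq_sub_of_hasDerivAt hlog hint, neg_sub_neg, Real.exp_sub,
    Real.exp_log (hpos a), Real.exp_log (hpos b)]

theorem tendsto_intervalIntegral_atTop_s5 {r : ℕ → ℝ → ℝ} (hcont : ∀ n, Continuous (r n))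
    (hnonneg : ∀ n x, 0 ≤ r n x) (hr : ∀ x, Tendsto (fun n => r n x) atTop atTop) {a b : ℝ}
    (hab : a < b) : Tendsto (fun n => ∫ x in a..b, r n x) atTop atTop := by
  rw [tendsto_atTop]
  intro M
  set c := |M| / (b - a) + 1
  have hc : 0 < c := by positivity
  have hMc : M < (b - a) * c := by
    have : (b - a) * c = |M| + (b - a) := by
      rw [mul_add, mul_div_cancel₀ _ (sub_pos.2 hab).ne', mul_one]
    linarith [le_abs_self M]
  have hmin : Tendsto (fun n => ∫ x in a..b, min (r n x) c) atTop (nhds ((b - a) * c)) := by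
    rw [← smul_eq_mul, ← intervalIntegral.integral_const]
    refine intervalIntegral.tendsto_integral_filter_of_dominated_convergence (fun _ => c)
      (Eventually.of_forall fun n => ((hcont n).min continuous_const).aestronglyMeasurable)
      (Eventually.of_forall fun n => MeasureTheory.ae_of_all _ fun x _ => ?_)
      intervalIntegrable_const (MeasureTheory.ae_of_all _ fun x _ => ?_)
    · rw [Real.norm_of_nonneg (le_min (hnonneg n x) hc.le)]
      exact min_le_right _ _
    · exact tendsto_const_nhds.congr' <|
        ((hr x).eventually_ge_atTop c).mono fun n hn => (min_eq_right hn).symm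
  filter_upwards [hmin.eventually (eventually_ge_nhds hMc)] with n hn
  refine hn.trans (intervalIntegral.integral_mono_on hab.le ?_ ?_ fun x _ => min_le_left _ _)
  · exact ((hcont n).min continuous_const).intervalIntegrable _ _
  · exact (hcont n).intervalIntegrable _ _

theorem exists_forall_le_of_eventually_forall_le {ι : Type*} {g : ℕ → ι → ℝ} {B : ℝ}
    (hbdd : ∀ n, ∃ C, ∀ i, g n i ≤ C) (hev : ∀ᶠ n in atTop, ∀ i, g n i ≤ B) :
    ∃ C, ∀ n i, g n i ≤ C := by
  obtain ⟨N, hN⟩ := eventually_atTop.1 hev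
  choose C hC using hbdd
  obtain ⟨M, hM⟩ := ((finite_Iio N).image C).bddAbove
  refine ⟨max B M, fun n i => ?_⟩
  rcases lt_or_ge n N with hn | hn
  · exact (hC n i).trans ((hM (mem_image_of_mem C hn)).trans (le_max_right _ _))
  · exact (hN n hn i).trans (le_max_left _ _)

theorem abs_ciSup_le_max {ι : Type*} {g : ι → ℝ} {C D : ℝ} (hup : ∀ i, g i ≤ C) (i₀ : ι)
    (hlow : D ≤ g i₀) : |⨆ i, g i| ≤ max C (-D) := by
  have : Nonempty ι := ⟨i₀⟩
  rw [abs_le]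
  constructor
  · linarith [le_max_right C (-D), le_ciSup ⟨C, forall_mem_range.2 hup⟩ i₀]
  · exact (ciSup_le hup).trans (le_max_left _ _)

theorem tendsto_deriv_div_deriv_atTop {U : ℕ → ℝ → ℝ} (hC2 : ∀ n, ContDiff ℝ 2 (U n))
    (hconc : ∀ n, ConcaveOn ℝ univ (U n)) (hpos : ∀ n x, 0 < deriv (U n) x)
    (hra : ∀ x, Tendsto (fun n => absRiskAversion (U n) x) atTop atTop) {a b : ℝ} (hab : a < b) :
    Tendsto (fun n => deriv (U n) a / deriv (U n) b) atTop atTop := by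
  simp_rw [deriv_div_deriv_eq_exp_integral_absRiskAversion (hC2 _) (hpos _)]
  exact Real.tendsto_exp_atTop.comp (tendsto_intervalIntegral_atTop_s5
    (fun n => continuous_absRiskAversion (hC2 n) fun x => (hpos n x).ne')
    (fun n x => absRiskAversion_nonneg (hconc n) (hC2 n) (hpos n x).le) hra hab)

theorem conjugates_uniformly_bounded_on_compacts_general (U : ℕ → ℝ → ℝ)
    (hC2 : ∀ n, ContDiff ℝ 2 (U n))
    (hconc : ∀ n, StrictConcaveOn ℝ Set.univ (U n))
    (hbij : ∀ n, Set.BijOn (deriv (U n)) Set.univ (Set.Ioi (0 : ℝ)))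
    (hra : ∀ x : ℝ,
      Tendsto (fun n => -(deriv (deriv (U n)) x) / deriv (U n) x) atTop atTop)
    (x₀ α β : ℝ) (hα : 0 < α)
    (hd : Tendsto (fun n => deriv (U n) x₀) atTop (nhds α))
    (hu : Tendsto (fun n => U n x₀) atTop (nhds β)) :
    ∀ K > (1 : ℝ), ∃ C : ℝ, ∀ n : ℕ, ∀ y ∈ Set.Icc (1 / K) K,
      |⨆ x : ℝ, (U n x - x * y)| ≤ C := by
  intro K hK
  have hK0 : 0 < K := one_pos.trans hK
  have hpos n x : 0 < deriv (U n) x := (hbij n).mapsTo (mem_univ x)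
  have hdiff n : Differentiable ℝ (U n) := (hC2 n).differentiable two_ne_zero
  have hratio {a b : ℝ} (hab : a < b) :=
    tendsto_deriv_div_deriv_atTop hC2 (fun n => (hconc n).concaveOn) hpos hra hab
  have hleft : Tendsto (fun n => deriv (U n) (x₀ - 1)) atTop atTop :=
    (hd.pos_mul_atTop hα (hratio (sub_one_lt x₀))).congr fun n => mul_div_cancel₀ _ (hpos n x₀).ne'
  have hright : Tendsto (fun n => deriv (U n) (x₀ + 1)) atTop (nhds 0) :=
    (hd.div_atTop (hratio (lt_add_one x₀))).congr fun n => div_div_cancel₀ (hpos n x₀).ne'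
  have hev : ∀ᶠ n in atTop, ∀ p : Icc (1 / K) K × ℝ,
      U n p.2 - p.2 * p.1 ≤ (β + 1) + (α + 1) + K * max |x₀ - 1| |x₀ + 1| := by
    filter_upwards [hleft.eventually_ge_atTop K,
      hright.eventually (eventually_le_nhds (one_div_pos.2 hK0)),
      hu.eventually (eventually_le_nhds (lt_add_one β)),
      hd.eventually (eventually_le_nhds (lt_add_one α))] with n hleftK hrightK hUβ hdα p
    have htangent := (hconc n).concaveOn.le_add_deriv_mul_sub (mem_univ x₀) (mem_univ (x₀ + 1))
      (hdiff n x₀)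
    rw [add_sub_cancel_left, mul_one] at htangent
    linarith [(hconc n).concaveOn.sub_mul_le (hdiff n _) (hdiff n _) (hpos n _).le hrightK hleftK
      p.1.2 p.2]
  have hbdd n : ∃ C, ∀ p : Icc (1 / K) K × ℝ, U n p.2 - p.2 * p.1 ≤ C := by
    obtain ⟨a, -, ha⟩ := (hbij n).surjOn (mem_Ioi.2 hK0)
    obtain ⟨b, -, hb⟩ := (hbij n).surjOn (mem_Ioi.2 (one_div_pos.2 hK0))
    exact ⟨_, fun p => (hconc n).concaveOn.sub_mul_le (hdiff n a) (hdiff n b) (hpos n b).le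
      hb.le ha.ge p.1.2 p.2⟩
  obtain ⟨C, hC⟩ := exists_forall_le_of_eventually_forall_le hbdd hev
  obtain ⟨L, hL⟩ := hu.bddBelow_range
  refine ⟨max C (-(L - |x₀| * K)), fun n y hy =>
    abs_ciSup_le_max (fun x => hC n (⟨y, hy⟩, x)) x₀ ?_⟩
  have hy0 : 0 ≤ y := (one_div_pos.2 hK0).le.trans hy.1
  nlinarith [hL (mem_range_self n), le_abs_self x₀, abs_nonneg x₀, hy.2]

/-- Under the assumptions of the risk-averse limit theorem, the Fenchel conjugates
`V n` are uniformly bounded on each compact interval `[1/K, K]` with `K > 1`. -/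
theorem conjugates_uniformly_bounded_on_compacts (U : ℕ → ℝ → ℝ)
    (hC2 : ∀ n, ContDiff ℝ 2 (U n))
    (hconc : ∀ n, StrictConcaveOn ℝ Set.univ (U n))
    (hmono : ∀ n, StrictMono (U n))
    (hbij : ∀ n, Set.BijOn (deriv (U n)) Set.univ (Set.Ioi (0 : ℝ)))
    (hra : ∀ x : ℝ,
      Tendsto (fun n => -(deriv (deriv (U n)) x) / deriv (U n) x) atTop atTop)
    (x₀ α β : ℝ) (hα : 0 < α)
    (hd : Tendsto (fun n => deriv (U n) x₀) atTop (nhds α))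
    (hu : Tendsto (fun n => U n x₀) atTop (nhds β)) :
    ∀ K > (1 : ℝ), ∃ C : ℝ, ∀ n : ℕ, ∀ y ∈ Set.Icc (1 / K) K,
      |⨆ x : ℝ, (U n x - x * y)| ≤ C :=
  conjugates_uniformly_bounded_on_compacts_general U hC2 hconc hbij hra x₀ α β hα hd hu
end

section
/- For α > 0 let U_α : ℝ → ℝ be defined by U_α(x) := −(1/α)·((x+1)^{−α} − 1) for x > 0 and U_α(x) := −(1/(α+2))·((1−x)^{α+2} − 1) for x ≤ 0. Then its Fenchel conjugate V_α(y) := sup_{x ∈ ℝ} (U_α(x) − x y) satisfies, for every y > 0: V_α(y) = 1/(α+2) − y + (1 − 1/(α+2))·y^{(α+2)/(α+1)} if y > 1, and V_α(y) = 1/α + y − (1 + 1/α)·y^{α/(α+1)} if 0 < y ≤ 1. -/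
/-!
On each side of `0` the utility is a concave power function, and its conjugate there is
computed by Young's inequality (for `x > 0` in a form with the negative exponent `-α`), with
equality at the point where `U' x = y`. Since `U' 0 = 1`, the maximiser lies in `[0, ∞)` when
`y ≤ 1` and in `(-∞, 0]` when `y > 1`; the other branch contributes at most `U 0 = 0`, because
both branches lie below the tangent line `x ↦ x` at `0`.
-/

open Real

section PowerUtility

variable {α p x y : ℝ}

noncomputable def gainUtility (α x : ℝ) : ℝ := -(1 / α) * ((x + 1) ^ (-α) - 1)

noncomputable def lossUtility (p x : ℝ) : ℝ := -(1 / p) * ((1 - x) ^ p - 1)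

noncomputable def gainConjugate (α y : ℝ) : ℝ :=
  1 / α + y - (1 + 1 / α) * y ^ (α / (α + 1))

noncomputable def lossConjugate (p y : ℝ) : ℝ :=
  1 / p - y + (1 - 1 / p) * y ^ (p / (p - 1))

theorem young_inequality_neg_exponent {s : ℝ} (hα : 0 < α) (hs : 0 < s) (hy : 0 ≤ y) :
    (1 + 1 / α) * y ^ (α / (α + 1)) ≤ s ^ (-α) / α + s * y := by
  have hα₁ : 0 < α + 1 := by linarith
  have hpq : (α + 1).HolderConjugate ((α + 1) / α) := by
    simpa [Real.conjExponent] using Real.HolderConjugate.conjExponent (lt_add_of_pos_left 1 hα)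
  have young := young_inequality_of_nonneg (inv_nonneg.2 (rpow_nonneg hs.le (α / (α + 1))))
    (rpow_nonneg (mul_nonneg hs.le hy) (α / (α + 1))) hpq
  have ha : ((s ^ (α / (α + 1)))⁻¹) ^ (α + 1) = s ^ (-α) := by
    rw [inv_rpow (rpow_nonneg hs.le _), ← rpow_mul hs.le, div_mul_cancel₀ _ hα₁.ne',
      rpow_neg hs.le]
  have hb : ((s * y) ^ (α / (α + 1))) ^ ((α + 1) / α) = s * y := by
    rw [← rpow_mul (mul_nonneg hs.le hy), div_mul_div_cancel₀ hα₁.ne', div_self hα.ne',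
      rpow_one]
  have hab : (s ^ (α / (α + 1)))⁻¹ * (s * y) ^ (α / (α + 1)) = y ^ (α / (α + 1)) := by
    rw [mul_rpow hs.le hy, inv_mul_cancel_left₀ (rpow_pos_of_pos hs _).ne']
  rw [ha, hb, hab] at young
  calc (1 + 1 / α) * y ^ (α / (α + 1))
      ≤ (1 + 1 / α) * (s ^ (-α) / (α + 1) + s * y / ((α + 1) / α)) := by gcongr
    _ = s ^ (-α) / α + s * y := by field_simp

theorem gainUtility_sub_mul_le (hα : 0 < α) (hx : -1 < x) (hy : 0 ≤ y) :
    gainUtility α x - x * y ≤ gainConjugate α y := by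
  have := young_inequality_neg_exponent hα (neg_lt_iff_pos_add.1 hx) hy
  simp only [gainUtility, gainConjugate]
  linear_combination this

theorem gainUtility_sub_mul_eq (hα : 0 < α) (hy : 0 < y) :
    gainUtility α (y ^ (-(1 / (α + 1))) - 1) - (y ^ (-(1 / (α + 1))) - 1) * y =
      gainConjugate α y := by
  have hα₁ : α + 1 ≠ 0 := by linarith
  have hpow : (y ^ (-(1 / (α + 1)))) ^ (-α) = y ^ (α / (α + 1)) := by
    rw [← rpow_mul hy.le]; ring_nf
  have hmul : y ^ (-(1 / (α + 1))) * y = y ^ (α / (α + 1)) := by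
    rw [← rpow_add_one hy.ne']; congr 1; field_simp; ring
  simp only [gainUtility, gainConjugate, sub_add_cancel, hpow]
  linear_combination -hmul

theorem lossUtility_sub_mul_le (hp : 1 < p) (hx : x ≤ 1) (hy : 0 ≤ y) :
    lossUtility p x - x * y ≤ lossConjugate p y := by
  have young :=
    young_inequality_of_nonneg (sub_nonneg.2 hx) hy (Real.HolderConjugate.conjExponent hp)
  have hq : y ^ (p / (p - 1)) / (p / (p - 1)) = (1 - 1 / p) * y ^ (p / (p - 1)) := by
    have : p - 1 ≠ 0 := by linarith
    field_simp
  simp only [Real.conjExponent, hq] at young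
  simp only [lossUtility, lossConjugate]
  linear_combination young

theorem lossUtility_sub_mul_eq (hp : 1 < p) (hy : 0 < y) :
    lossUtility p (1 - y ^ (1 / (p - 1))) - (1 - y ^ (1 / (p - 1))) * y = lossConjugate p y := by
  have hp₁ : p - 1 ≠ 0 := by linarith
  have hpow : (y ^ (1 / (p - 1))) ^ p = y ^ (p / (p - 1)) := by
    rw [← rpow_mul hy.le]; ring_nf
  have hmul : y ^ (1 / (p - 1)) * y = y ^ (p / (p - 1)) := by
    rw [← rpow_add_one hy.ne']; congr 1; field_simp; ring
  simp only [lossUtility, lossConjugate, sub_sub_cancel, hpow]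
  linear_combination hmul

@[simp] theorem gainUtility_zero : gainUtility α 0 = 0 := by simp [gainUtility]

@[simp] theorem lossUtility_zero : lossUtility p 0 = 0 := by simp [lossUtility]

@[simp] theorem gainConjugate_one : gainConjugate α 1 = 0 := by rw [gainConjugate, one_rpow]; ring

@[simp] theorem lossConjugate_one : lossConjugate p 1 = 0 := by simp [lossConjugate]

theorem gainConjugate_nonneg (hα : 0 < α) (hy : 0 ≤ y) : 0 ≤ gainConjugate α y := by
  simpa using gainUtility_sub_mul_le hα neg_one_lt_zero hy

theorem lossConjugate_nonneg (hp : 1 < p) (hy : 0 ≤ y) : 0 ≤ lossConjugate p y := by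
  simpa using lossUtility_sub_mul_le hp zero_le_one hy

theorem gainUtility_le_self (hα : 0 < α) (hx : -1 < x) : gainUtility α x ≤ x := by
  simpa using gainUtility_sub_mul_le hα hx zero_le_one

theorem lossUtility_le_self (hp : 1 < p) (hx : x ≤ 1) : lossUtility p x ≤ x := by
  simpa using lossUtility_sub_mul_le hp hx zero_le_one

noncomputable def powerUtility (α x : ℝ) : ℝ :=
  if 0 < x then gainUtility α x else lossUtility (α + 2) x

theorem powerUtility_of_nonneg (hx : 0 ≤ x) : powerUtility α x = gainUtility α x := by
  rcases hx.eq_or_lt with rfl | hx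
  · simp [powerUtility]
  · rw [powerUtility, if_pos hx]

theorem powerUtility_of_nonpos (hx : x ≤ 0) : powerUtility α x = lossUtility (α + 2) x := by
  rw [powerUtility, if_neg hx.not_gt]

theorem powerUtility_sub_mul_le_gainConjugate (hα : 0 < α) (hy : 0 ≤ y) (hy₁ : y ≤ 1)
    (x : ℝ) :
    powerUtility α x - x * y ≤ gainConjugate α y := by
  rcases le_or_gt x 0 with hx | hx
  · rw [powerUtility_of_nonpos hx]
    calc lossUtility (α + 2) x - x * y ≤ lossUtility (α + 2) x - x := by nlinarith
      _ ≤ 0 := sub_nonpos.2 (lossUtility_le_self (by linarith) (by linarith))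
      _ ≤ gainConjugate α y := gainConjugate_nonneg hα hy
  · rw [powerUtility_of_nonneg hx.le]
    exact gainUtility_sub_mul_le hα (by linarith) hy

theorem powerUtility_sub_mul_le_lossConjugate (hα : 0 < α) (hy₁ : 1 ≤ y) (x : ℝ) :
    powerUtility α x - x * y ≤ lossConjugate (α + 2) y := by
  rcases le_or_gt x 0 with hx | hx
  · rw [powerUtility_of_nonpos hx]
    exact lossUtility_sub_mul_le (by linarith) (by linarith) (by linarith)
  · rw [powerUtility_of_nonneg hx.le]
    calc gainUtility α x - x * y ≤ gainUtility α x - x := by nlinarith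
      _ ≤ 0 := sub_nonpos.2 (gainUtility_le_self hα (by linarith))
      _ ≤ lossConjugate (α + 2) y := lossConjugate_nonneg (by linarith) (by linarith)

theorem iSup_powerUtility_sub_mul_of_le_one (hα : 0 < α) (hy : 0 < y) (hy₁ : y ≤ 1) :
    ⨆ x, (powerUtility α x - x * y) = gainConjugate α y := by
  have hx₀ : 0 ≤ y ^ (-(1 / (α + 1))) - 1 :=
    sub_nonneg.2 (one_le_rpow_of_pos_of_le_one_of_nonpos hy hy₁ (neg_nonpos.2 (by positivity)))
  refine IsGreatest.csSup_eq ⟨⟨y ^ (-(1 / (α + 1))) - 1, ?_⟩,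
    Set.forall_mem_range.2 (powerUtility_sub_mul_le_gainConjugate hα hy.le hy₁)⟩
  beta_reduce
  rw [powerUtility_of_nonneg hx₀, gainUtility_sub_mul_eq hα hy]

theorem iSup_powerUtility_sub_mul_of_one_le (hα : 0 < α) (hy₁ : 1 ≤ y) :
    ⨆ x, (powerUtility α x - x * y) = lossConjugate (α + 2) y := by
  have hx₀ : 1 - y ^ (1 / (α + 2 - 1)) ≤ 0 :=
    sub_nonpos.2 (one_le_rpow hy₁ (one_div_nonneg.2 (by linarith)))
  refine IsGreatest.csSup_eq ⟨⟨1 - y ^ (1 / (α + 2 - 1)), ?_⟩,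
    Set.forall_mem_range.2 (powerUtility_sub_mul_le_lossConjugate hα hy₁)⟩
  beta_reduce
  rw [powerUtility_of_nonpos hx₀, lossUtility_sub_mul_eq (by linarith) (by linarith)]

end PowerUtility

/-- Explicit formula for the Fenchel conjugate of the two-sided power utility. -/
theorem power_utility_conjugate (α : ℝ) (hα : 0 < α) (U : ℝ → ℝ)
    (hU : ∀ x : ℝ, U x =
      if 0 < x then -(1 / α) * ((x + 1) ^ (-α) - 1)
      else -(1 / (α + 2)) * ((1 - x) ^ (α + 2) - 1)) :
    ∀ y > (0 : ℝ),
      (1 < y →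
        (⨆ x : ℝ, (U x - x * y)) =
          1 / (α + 2) - y + (1 - 1 / (α + 2)) * y ^ ((α + 2) / (α + 1))) ∧
      (y ≤ 1 →
        (⨆ x : ℝ, (U x - x * y)) =
          1 / α + y - (1 + 1 / α) * y ^ (α / (α + 1))) := by
  obtain rfl : U = powerUtility α := funext hU
  intro y hy
  refine ⟨fun hy₁ ↦ ?_, fun hy₁ ↦ iSup_powerUtility_sub_mul_of_le_one hα hy hy₁⟩
  rw [iSup_powerUtility_sub_mul_of_one_le hα hy₁.le, lossConjugate,
    show α + 2 - 1 = α + 1 by ring]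
end

section
/- Fix α₀ > 0 and for α > 0 let V_α : (0,∞) → ℝ be given by V_α(y) = 1/(α+2) − y + (1 − 1/(α+2))·y^{(α+2)/(α+1)} for y > 1 and V_α(y) = 1/α + y − (1 + 1/α)·y^{α/(α+1)} for 0 < y ≤ 1 (the Fenchel conjugate of the two-sided power utility). Then for every interval [λ₀, λ₁] ⊂ (0,∞) there exist constants C₁, C₂, C₃ ≥ 0 such that V_α(λ y) ≤ C₁ V_α(y) + C₂ y + C₃ for all α ≥ α₀, all y > 0 and all λ ∈ [λ₀, λ₁]. -/
/-!
Both branches of `V_α` are nonnegative by Bernoulli's inequality, since the exponents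
`(α+2)/(α+1) ≥ 1` and `α/(α+1) ≤ 1` are reciprocal to the coefficients `1 - 1/(α+2)` and
`1 + 1/α`. On `l * y ≤ 1` the conjugate is at most `1/α + l y`. On `l * y > 1` it is at most
`1 + (1 - 1/(α+2)) l^p y^p` with `p = (α+2)/(α+1) ∈ [1, 2]`, so `l^p ≤ max 1 hi ^ 2`, and
`(1 - 1/(α+2)) y^p` is bounded by `V_α y + y` for `y > 1` and by `1` for `y ≤ 1`.
-/

open Real

noncomputable def powerConj (α y : ℝ) : ℝ :=
  if 1 < y then 1 / (α + 2) - y + (1 - 1 / (α + 2)) * y ^ ((α + 2) / (α + 1))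
  else 1 / α + y - (1 + 1 / α) * y ^ (α / (α + 1))

lemma rpow_le_max_one_sq {l M p : ℝ} (hl : 0 ≤ l) (hlM : l ≤ M) (hp0 : 0 ≤ p) (hp2 : p ≤ 2) :
    l ^ p ≤ max 1 M ^ 2 :=
  calc l ^ p ≤ max 1 M ^ p := rpow_le_rpow hl (hlM.trans (le_max_right 1 M)) hp0
    _ ≤ max 1 M ^ (2 : ℝ) := rpow_le_rpow_of_exponent_le (le_max_left 1 M) hp2
    _ = max 1 M ^ 2 := rpow_two _

section

variable {α y : ℝ}

lemma powerConj_nonneg (hα : 0 < α) (hy : 0 ≤ y) : 0 ≤ powerConj α y := by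
  have h1 : 0 < α + 1 := by linarith
  have h2 : 0 < α + 2 := by linarith
  unfold powerConj
  split_ifs with hy1
  · have hp : 1 ≤ (α + 2) / (α + 1) := by rw [le_div_iff₀ h1]; linarith
    have hB := one_add_mul_self_le_rpow_one_add (s := y - 1) (by linarith) hp
    have hc : (1 - 1 / (α + 2)) * ((α + 2) / (α + 1)) = 1 := by field_simp; ring
    rw [add_sub_cancel] at hB
    have hc0 : 0 ≤ 1 - 1 / (α + 2) := sub_nonneg.mpr (by rw [div_le_one h2]; linarith)
    nlinarith [mul_le_mul_of_nonneg_left hB hc0]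
  · have hq : α / (α + 1) ≤ 1 := by rw [div_le_one h1]; linarith
    have hB := rpow_one_add_le_one_add_mul_self (s := y - 1) (by linarith)
      (div_nonneg hα.le h1.le) hq
    have hc : (1 + 1 / α) * (α / (α + 1)) = 1 := by field_simp
    rw [add_sub_cancel] at hB
    nlinarith [mul_le_mul_of_nonneg_left hB (by positivity : (0 : ℝ) ≤ 1 + 1 / α)]

lemma powerConj_le_of_le_one (hα : 0 < α) (hy : 0 ≤ y) (hy1 : y ≤ 1) :
    powerConj α y ≤ 1 / α + y := by
  have : 0 ≤ (1 + 1 / α) * y ^ (α / (α + 1)) := by positivity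
  rw [powerConj, if_neg hy1.not_gt]
  linarith

lemma powerConj_mul_le_of_one_lt {l K : ℝ} (hα : 0 < α) (hy : 0 < y) (hl : 0 ≤ l)
    (hlK : l ^ ((α + 2) / (α + 1)) ≤ K) (hly : 1 < l * y) :
    powerConj α (l * y) ≤ K * powerConj α y + K * y + (1 + K) := by
  set p := (α + 2) / (α + 1)
  set c := 1 / (α + 2)
  have hc0 : 0 ≤ c := by positivity
  have hc1 : c ≤ 1 := by rw [div_le_one (by linarith)]; linarith
  have hK : 0 ≤ K := (rpow_nonneg hl p).trans hlK
  have hyp : 0 ≤ (1 - c) * y ^ p := mul_nonneg (by linarith) (rpow_nonneg hy.le p)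
  have hscale : (1 - c) * (l * y) ^ p ≤ K * ((1 - c) * y ^ p) := by
    rw [mul_rpow hl hy.le, mul_left_comm]
    exact mul_le_mul_of_nonneg_right hlK hyp
  have hV := powerConj_nonneg hα hy.le
  have hlhs : powerConj α (l * y) ≤ 1 + K * ((1 - c) * y ^ p) := by
    rw [powerConj, if_pos hly]
    nlinarith
  by_cases hy1 : 1 < y
  · have hrhs : (1 - c) * y ^ p ≤ powerConj α y + y := by
      rw [powerConj, if_pos hy1]
      linarith
    nlinarith [mul_le_mul_of_nonneg_left hrhs hK]
  · have hrhs : (1 - c) * y ^ p ≤ 1 := by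
      have := rpow_le_one hy.le (not_lt.mp hy1) (by positivity : 0 ≤ p)
      nlinarith
    nlinarith [mul_le_mul_of_nonneg_left hrhs hK, mul_nonneg hK hV, mul_nonneg hK hy.le]

end

/-- Uniform elasticity estimate for the conjugates of the two-sided power utilities,
uniformly over `α ≥ α₀`. -/
theorem power_conjugate_uniform_elasticity (α₀ : ℝ) (hα₀ : 0 < α₀)
    (V : ℝ → ℝ → ℝ)
    (hV : ∀ α > (0 : ℝ), ∀ y > (0 : ℝ), V α y =
      if 1 < y then 1 / (α + 2) - y + (1 - 1 / (α + 2)) * y ^ ((α + 2) / (α + 1))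
      else 1 / α + y - (1 + 1 / α) * y ^ (α / (α + 1)))
    (lo hi : ℝ) (hlo : 0 < lo) (hlohi : lo ≤ hi) :
    ∃ C₁ C₂ C₃ : ℝ, 0 ≤ C₁ ∧ 0 ≤ C₂ ∧ 0 ≤ C₃ ∧
      ∀ α ≥ α₀, ∀ y > (0 : ℝ), ∀ l ∈ Set.Icc lo hi,
        V α (l * y) ≤ C₁ * V α y + C₂ * y + C₃ := by
  have hV' : ∀ α > (0 : ℝ), ∀ y > (0 : ℝ), V α y = powerConj α y := hV
  set K := max 1 hi ^ 2
  have hK : 0 ≤ K := by positivity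
  refine ⟨K, K + hi, 1 / α₀ + 1 + K, hK, by linarith, by positivity, ?_⟩
  rintro α hα y hy l ⟨hlo_l, hl_hi⟩
  have hα0 : 0 < α := hα₀.trans_le hα
  have hl : 0 < l := hlo.trans_le hlo_l
  rw [hV' α hα0 y hy, hV' α hα0 (l * y) (mul_pos hl hy)]
  have hV := powerConj_nonneg hα0 hy.le
  have hKy := mul_nonneg hK hy.le
  have hhiy : l * y ≤ hi * y := mul_le_mul_of_nonneg_right hl_hi hy.le
  by_cases hly : 1 < l * y
  · have hp2 : (α + 2) / (α + 1) ≤ 2 := by rw [div_le_iff₀ (by linarith)]; linarith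
    have := powerConj_mul_le_of_one_lt hα0 hy hl.le
      (rpow_le_max_one_sq hl.le hl_hi (by positivity) hp2) hly
    nlinarith [mul_nonneg hl.le hy.le, one_div_pos.mpr hα₀]
  · have := powerConj_le_of_le_one hα0 (mul_pos hl hy).le (not_lt.mp hly)
    have : 1 / α ≤ 1 / α₀ := one_div_le_one_div_of_le hα₀ hα
    nlinarith [mul_nonneg hK hV]
end
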